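/- arXiv:2512.19224 — 2 statements merged into one kernel-verified Lean document; each statement's English description precedes it below -/
import Mathlib

section
/- Let E be a real inner product space (e.g. Euclidean space ℝⁿ), let M > 1 be a real constant, and let f : E → ℝ be a nonnegative function, convex on E, satisfying the Δ₂-condition f(2ξ) ≤ M·f(ξ) for all ξ ∈ E. Then at every point ξ ∈ E at which f is differentiable, with gradient ∇f(ξ) (the vector representing the Fréchet derivative via the inner product), one has ⟪∇f(ξ), ξ⟫ ≤ (M − 1)·f(ξ). -/
/-!
Restricted to the ray `t ↦ t • ξ`, the convex function `f` has derivative `f' ξ` at `t = 1`,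
which is at most the secant slope `f (2 • ξ) - f ξ` to `t = 2`; the `Δ₂`-condition bounds that
slope by `(M - 1) * f ξ`.
-/

open scoped RealInnerProductSpace

theorem ConvexOn.apply_sub_le_sub_of_hasFDerivAt {E : Type*} [NormedAddCommGroup E]
    [NormedSpace ℝ E] {s : Set E} {f : E → ℝ} {f' : E →L[ℝ] ℝ} {x y : E}
    (hf : ConvexOn ℝ s f) (hx : x ∈ s) (hy : y ∈ s) (hf' : HasFDerivAt f f' x) :
    f' (y - x) ≤ f y - f x := by
  have hline : ConvexOn ℝ (AffineMap.lineMap x y ⁻¹' s) (f ∘ AffineMap.lineMap x y) :=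
    hf.comp_affineMap _
  have hderiv : HasDerivAt (f ∘ AffineMap.lineMap x y) (f' (y - x)) (0 : ℝ) := by
    refine HasFDerivAt.comp_hasDerivAt _ ?_ AffineMap.hasDerivAt_lineMap
    simpa using hf'
  simpa [slope_def_field] using
    hline.le_slope_of_hasDerivAt (by simpa using hx) (by simpa using hy) zero_lt_one hderiv

theorem gradient_pairing_le_of_delta_two_general
    {E : Type*} [NormedAddCommGroup E] [InnerProductSpace ℝ E]
    (M : ℝ)
    (f : E → ℝ)
    (hf_convex : ConvexOn ℝ Set.univ f)
    (hΔ₂ : ∀ ξ : E, f ((2 : ℝ) • ξ) ≤ M * f ξ)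
    (ξ : E) (f' : E →L[ℝ] ℝ) (hf' : HasFDerivAt f f' ξ)
    (g : E) (hg : ∀ v : E, ⟪g, v⟫ = f' v) :
    ⟪g, ξ⟫ ≤ (M - 1) * f ξ := by
  have hsecant : f' ξ ≤ f ((2 : ℝ) • ξ) - f ξ := by
    simpa [two_smul] using
      hf_convex.apply_sub_le_sub_of_hasFDerivAt (Set.mem_univ _) (Set.mem_univ ((2 : ℝ) • ξ)) hf'
  rw [hg ξ]
  linarith [hΔ₂ ξ]

/-- If `f : E → ℝ` is nonnegative, convex, and satisfies the
`Δ₂`-condition `f (2 • ξ) ≤ M * f ξ` with `M > 1`, then at every point `ξ` of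
differentiability, the gradient `g` (the vector representing the Fréchet
derivative via the inner product) satisfies `⟪g, ξ⟫ ≤ (M - 1) * f ξ`. -/
theorem gradient_pairing_le_of_delta_two
    {E : Type*} [NormedAddCommGroup E] [InnerProductSpace ℝ E]
    (M : ℝ) (hM : 1 < M)
    (f : E → ℝ) (hf_nonneg : ∀ ξ : E, 0 ≤ f ξ)
    (hf_convex : ConvexOn ℝ Set.univ f)
    (hΔ₂ : ∀ ξ : E, f ((2 : ℝ) • ξ) ≤ M * f ξ)
    (ξ : E) (f' : E →L[ℝ] ℝ) (hf' : HasFDerivAt f f' ξ)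
    (g : E) (hg : ∀ v : E, ⟪g, v⟫ = f' v) :
    ⟪g, ξ⟫ ≤ (M - 1) * f ξ :=
  gradient_pairing_le_of_delta_two_general M f hf_convex hΔ₂ ξ f' hf' g hg
end

section
/- Let E be a real inner product space (e.g. Euclidean space ℝⁿ), let M ≥ m > 1 be real constants, and let f : E → ℝ be a nonnegative function, convex on E, satisfying the two-sided Δ₂-condition m·f(ξ) ≤ f(2ξ) ≤ M·f(ξ) for all ξ ∈ E. Then at every point ξ ∈ E at which f is differentiable, with gradient ∇f(ξ), one has 2·(1 − 1/m)·f(ξ) ≤ ⟪∇f(ξ), ξ⟫ ≤ (M − 1)·f(ξ). -/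
/-! A convex function lies above its tangent hyperplane at `ξ`. Evaluating the tangent inequality
at `2 • ξ` and at `2⁻¹ • ξ`, and bounding `f` there by the two halves of the `Δ₂`-condition, gives
the two bounds on the directional derivative `f' ξ = ⟪∇f(ξ), ξ⟫`. -/

open scoped RealInnerProductSpace

namespace ConvexOn

variable {E : Type*} [NormedAddCommGroup E] [NormedSpace ℝ E] {s : Set E} {f : E → ℝ}
  {f' : E →L[ℝ] ℝ} {x : E}

theorem add_apply_sub_le_of_hasFDerivAt {y : E} (hf : ConvexOn ℝ s f) (hx : x ∈ s) (hy : y ∈ s)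
    (hf' : HasFDerivAt f f' x) :
    f x + f' (y - x) ≤ f y := by
  set ℓ : ℝ →ᵃ[ℝ] E := AffineMap.lineMap x y
  have hderiv : HasDerivAt (f ∘ ℓ) (f' (y - x)) 0 := by
    rw [← AffineMap.lineMap_apply_zero (k := ℝ) x y] at hf'
    exact hf'.comp_hasDerivAt 0 AffineMap.hasDerivAt_lineMap
  have hslope := (hf.comp_affineMap ℓ).le_slope_of_hasDerivAt (x := 0) (y := 1)
    (by simpa [ℓ] using hx) (by simpa [ℓ] using hy) one_pos hderiv
  simp only [slope_def_field, Function.comp_apply, ℓ, AffineMap.lineMap_apply_one,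
    AffineMap.lineMap_apply_zero, sub_zero, div_one] at hslope
  linarith

theorem apply_self_le_of_hasFDerivAt {M : ℝ} (hf : ConvexOn ℝ s f) (hx : x ∈ s)
    (h2x : (2 : ℝ) • x ∈ s) (hf' : HasFDerivAt f f' x) (hM : f ((2 : ℝ) • x) ≤ M * f x) :
    f' x ≤ (M - 1) * f x := by
  have htangent := hf.add_apply_sub_le_of_hasFDerivAt hx h2x hf'
  rw [show (2 : ℝ) • x - x = x by module] at htangent
  linarith

theorem le_apply_self_of_hasFDerivAt {m : ℝ} (hm : 0 < m) (hf : ConvexOn ℝ s f) (hx : x ∈ s)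
    (hhalf : (2 : ℝ)⁻¹ • x ∈ s) (hf' : HasFDerivAt f f' x)
    (hmx : m * f ((2 : ℝ)⁻¹ • x) ≤ f x) :
    2 * (1 - 1 / m) * f x ≤ f' x := by
  have htangent := hf.add_apply_sub_le_of_hasFDerivAt hx hhalf hf'
  rw [show (2 : ℝ)⁻¹ • x - x = (-2⁻¹ : ℝ) • x by module, map_smul, smul_eq_mul] at htangent
  have hhalf_le : f ((2 : ℝ)⁻¹ • x) ≤ f x / m := (le_div_iff₀' hm).2 hmx
  rw [show 2 * (1 - 1 / m) * f x = 2 * (f x - f x / m) by ring]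
  linarith

end ConvexOn

theorem gradient_pairing_bounds_of_two_sided_delta_two_general
    {E : Type*} [NormedAddCommGroup E] [InnerProductSpace ℝ E]
    (m M : ℝ) (hm : 1 < m)
    (f : E → ℝ)
    (hf_convex : ConvexOn ℝ Set.univ f)
    (hΔ₂ : ∀ ξ : E, m * f ξ ≤ f ((2 : ℝ) • ξ) ∧ f ((2 : ℝ) • ξ) ≤ M * f ξ)
    (ξ : E) (f' : E →L[ℝ] ℝ) (hf' : HasFDerivAt f f' ξ)
    (g : E) (hg : ∀ v : E, ⟪g, v⟫ = f' v) :
    2 * (1 - 1 / m) * f ξ ≤ ⟪g, ξ⟫ ∧ ⟪g, ξ⟫ ≤ (M - 1) * f ξ := by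
  have hhalf : m * f ((2 : ℝ)⁻¹ • ξ) ≤ f ξ := by
    simpa [smul_smul] using (hΔ₂ ((2 : ℝ)⁻¹ • ξ)).1
  rw [hg ξ]
  exact ⟨hf_convex.le_apply_self_of_hasFDerivAt (zero_lt_one.trans hm) trivial trivial hf' hhalf,
    hf_convex.apply_self_le_of_hasFDerivAt trivial trivial hf' (hΔ₂ ξ).2⟩

/-- If `f : E → ℝ` is nonnegative, convex, and satisfies the
two-sided `Δ₂`-condition `m * f ξ ≤ f (2 • ξ) ≤ M * f ξ` with `M ≥ m > 1`,
then at every point `ξ` of differentiability, the gradient `g` satisfies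
`2 * (1 - 1/m) * f ξ ≤ ⟪g, ξ⟫ ≤ (M - 1) * f ξ`. -/
theorem gradient_pairing_bounds_of_two_sided_delta_two
    {E : Type*} [NormedAddCommGroup E] [InnerProductSpace ℝ E]
    (m M : ℝ) (hm : 1 < m) (hmM : m ≤ M)
    (f : E → ℝ) (hf_nonneg : ∀ ξ : E, 0 ≤ f ξ)
    (hf_convex : ConvexOn ℝ Set.univ f)
    (hΔ₂ : ∀ ξ : E, m * f ξ ≤ f ((2 : ℝ) • ξ) ∧ f ((2 : ℝ) • ξ) ≤ M * f ξ)
    (ξ : E) (f' : E →L[ℝ] ℝ) (hf' : HasFDerivAt f f' ξ)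
    (g : E) (hg : ∀ v : E, ⟪g, v⟫ = f' v) :
    2 * (1 - 1 / m) * f ξ ≤ ⟪g, ξ⟫ ∧ ⟪g, ξ⟫ ≤ (M - 1) * f ξ :=
  gradient_pairing_bounds_of_two_sided_delta_two_general m M hm f hf_convex hΔ₂ ξ f' hf' g hg
end
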